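/- For every pair of integers (a, b) with 2 ≤ a ≤ b ≤ 2a and (a,b) ≠ (2,3), there exists a nontrivial tree T with γ_r(T) = a and γ_{rI}(T) = b; moreover these conditions on (a,b) are necessary. -/

import Mathlib

open scoped Classical
open Finset

/-- A restrained Italian dominating function: values in {0,1,2}, every 0-vertex has
neighborhood weight ≥ 2, and every 0-vertex has a 0-neighbor. -/
def IsRIDF {V : Type*} [Fintype V] (G : SimpleGraph V) (f : V → ℕ) : Prop :=
  (∀ v, f v ≤ 2) ∧
  (∀ v, f v = 0 → 2 ≤ ∑ u ∈ Finset.univ.filter (fun u => G.Adj v u), f u) ∧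
  (∀ v, f v = 0 → ∃ u, G.Adj v u ∧ f u = 0)

/-- The restrained Italian domination number. -/
noncomputable def ridNum {V : Type*} [Fintype V] (G : SimpleGraph V) : ℕ :=
  sInf {w | ∃ f : V → ℕ, IsRIDF G f ∧ ∑ v, f v = w}

/-- A restrained dominating set. -/
def IsRDS {V : Type*} [Fintype V] (G : SimpleGraph V) (S : Finset V) : Prop :=
  (∀ v ∉ S, ∃ u ∈ S, G.Adj v u) ∧ (∀ v ∉ S, ∃ u ∉ S, G.Adj v u)

/-- The restrained domination number. -/
noncomputable def rdNum {V : Type*} [Fintype V] (G : SimpleGraph V) : ℕ :=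
  sInf {k | ∃ S : Finset V, IsRDS G S ∧ S.card = k}

/-!
Necessity holds in every triangle-free graph. The support of a restrained Italian dominating
function is a restrained dominating set and twice the indicator of a restrained dominating set is
a restrained Italian dominating function, so `γ_r ≤ γ_rI ≤ 2 γ_r`. A restrained dominating set of
size at most one forces a triangle. If `γ_rI = 3`, no vertex can have weight `0` (a `0`-vertex and
its `0`-neighbour have disjoint neighbourhoods of weight at least `2` each), so the graph has three
vertices, and then no restrained dominating set has size two.

Sufficiency is realised by spiders. The star `K_{1,a-1}` gives `(a, a)`; `2a - b ≥ 2` leaves and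
`b - a` legs of length two give `a < b ≤ 2a - 2`; `2a - b ≤ 1` leaves and `b - a - 1` legs of
length three give `b ≥ 2a - 1`. Leaves lie in every restrained dominating set and carry positive
weight, which gives the lower bounds; for the upper bounds, the support of each explicit optimal
weighting is also a restrained dominating set.
-/

section Basic

variable {V : Type*} [Fintype V] {G : SimpleGraph V}

lemma isRDS_univ (G : SimpleGraph V) : IsRDS G univ := by
  simp [IsRDS]

lemma isRIDF_one (G : SimpleGraph V) : IsRIDF G 1 := by
  simp [IsRIDF]

lemma exists_isRDS_card_eq_rdNum (G : SimpleGraph V) : ∃ S, IsRDS G S ∧ #S = rdNum G :=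
  Nat.sInf_mem (s := {k | ∃ S : Finset V, IsRDS G S ∧ S.card = k}) ⟨_, univ, isRDS_univ G, rfl⟩

lemma exists_isRIDF_sum_eq_ridNum (G : SimpleGraph V) :
    ∃ f, IsRIDF G f ∧ ∑ v, f v = ridNum G :=
  Nat.sInf_mem (s := {w | ∃ f : V → ℕ, IsRIDF G f ∧ ∑ v, f v = w}) ⟨_, 1, isRIDF_one G, rfl⟩

lemma IsRDS.rdNum_le {S : Finset V} (hS : IsRDS G S) : rdNum G ≤ #S :=
  Nat.sInf_le ⟨S, hS, rfl⟩

lemma IsRIDF.ridNum_le {f : V → ℕ} (hf : IsRIDF G f) : ridNum G ≤ ∑ v, f v :=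
  Nat.sInf_le ⟨f, hf, rfl⟩

lemma le_rdNum {a : ℕ} (h : ∀ S, IsRDS G S → a ≤ #S) : a ≤ rdNum G := by
  obtain ⟨S, hS, hcard⟩ := exists_isRDS_card_eq_rdNum G
  exact hcard ▸ h S hS

lemma le_ridNum {b : ℕ} (h : ∀ f, IsRIDF G f → b ≤ ∑ v, f v) : b ≤ ridNum G := by
  obtain ⟨f, hf, hsum⟩ := exists_isRIDF_sum_eq_ridNum G
  exact hsum ▸ h f hf

lemma ridNum_le_card (G : SimpleGraph V) : ridNum G ≤ Fintype.card V := by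
  simpa using (isRIDF_one G).ridNum_le

end Basic

section Neighbours

variable {V : Type*} [Fintype V] {G : SimpleGraph V}

lemma sum_filter_adj_of_adj_iff_eq_or_eq {v w w' : V} (hv : ∀ x, G.Adj v x ↔ x = w ∨ x = w')
    (hww' : w ≠ w') (f : V → ℕ) : ∑ u ∈ univ.filter (G.Adj v), f u = f w + f w' := by
  rw [show univ.filter (G.Adj v) = {w, w'} by ext; simp [hv], sum_pair hww']

lemma card_eq_sum_ite_mem (S : Finset V) : #S = ∑ v, if v ∈ S then 1 else 0 := by
  simp

lemma IsRDS.mem_of_adj_iff_eq {S : Finset V} (hS : IsRDS G S) {v w : V}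
    (hv : ∀ x, G.Adj v x ↔ x = w) : v ∈ S := by
  by_contra h
  obtain ⟨u, hu, hvu⟩ := hS.1 v h
  obtain ⟨u', hu', hvu'⟩ := hS.2 v h
  exact hu' ((hv u').mp hvu' ▸ (hv u).mp hvu ▸ hu)

lemma IsRDS.of_adj_iff_eq_or_eq {S : Finset V} (hS : IsRDS G S) {v w w' : V}
    (hv : ∀ x, G.Adj v x ↔ x = w ∨ x = w') (hvS : v ∉ S) :
    (w ∈ S ∨ w' ∈ S) ∧ (w ∉ S ∨ w' ∉ S) := by
  obtain ⟨u, hu, hvu⟩ := hS.1 v hvS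
  obtain ⟨u', hu', hvu'⟩ := hS.2 v hvS
  rcases (hv u).mp hvu with rfl | rfl <;> rcases (hv u').mp hvu' with rfl | rfl <;> tauto

lemma IsRIDF.pos_of_adj_iff_eq {f : V → ℕ} (hf : IsRIDF G f) {v w : V}
    (hv : ∀ x, G.Adj v x ↔ x = w) : 0 < f v := by
  by_contra! h
  have h0 : f v = 0 := by omega
  have hsum := hf.2.1 v h0
  obtain ⟨u, hvu, hu⟩ := hf.2.2 v h0
  rw [show univ.filter (G.Adj v) = {w} by ext; simp [hv], sum_singleton] at hsum
  rw [(hv u).mp hvu] at hu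
  omega

lemma IsRIDF.of_adj_iff_eq_or_eq {f : V → ℕ} (hf : IsRIDF G f) {v w w' : V}
    (hv : ∀ x, G.Adj v x ↔ x = w ∨ x = w') (hww' : w ≠ w') (h0 : f v = 0) :
    2 ≤ f w + f w' ∧ (f w = 0 ∨ f w' = 0) := by
  have hsum := hf.2.1 v h0
  obtain ⟨u, hvu, hu⟩ := hf.2.2 v h0
  rw [sum_filter_adj_of_adj_iff_eq_or_eq hv hww'] at hsum
  rcases (hv u).mp hvu with rfl | rfl <;> tauto

end Neighbours

section Iso

variable {V W : Type*} [Fintype V] [Fintype W] {G : SimpleGraph V} {H : SimpleGraph W}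

lemma IsRDS.map_iso {S : Finset V} (hS : IsRDS G S) (e : G ≃g H) :
    IsRDS H (S.map e.toEquiv.toEmbedding) := by
  have hmem : ∀ w, w ∈ S.map e.toEquiv.toEmbedding ↔ e.symm w ∈ S := fun w =>
    Finset.mem_map_equiv
  have hadj : ∀ w u, G.Adj (e.symm w) u → H.Adj w (e u) := fun w u h => by
    simpa using e.map_adj_iff.mpr h
  have hmem_e : ∀ u, e u ∈ S.map e.toEquiv.toEmbedding ↔ u ∈ S := fun u => by
    rw [hmem, e.symm_apply_apply]
  constructor <;> intro w hw <;> rw [hmem] at hw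
  · obtain ⟨u, hu, hwu⟩ := hS.1 _ hw
    exact ⟨e u, (hmem_e u).mpr hu, hadj w u hwu⟩
  · obtain ⟨u, hu, hwu⟩ := hS.2 _ hw
    exact ⟨e u, (hmem_e u).not.mpr hu, hadj w u hwu⟩

lemma IsRIDF.comp_iso {f : V → ℕ} (hf : IsRIDF G f) (e : G ≃g H) :
    IsRIDF H (f ∘ e.symm) := by
  refine ⟨fun w => hf.1 _, fun w hw => ?_, fun w hw => ?_⟩
  · calc 2 ≤ ∑ u ∈ univ.filter (G.Adj (e.symm w)), f u := hf.2.1 _ hw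
      _ = ∑ u ∈ univ.filter (H.Adj w), (f ∘ e.symm) u := by
        refine Finset.sum_equiv e.toEquiv (fun u => ?_) (fun u _ => by simp)
        simpa using (e.map_adj_iff (v := e.symm w) (w := u)).symm
  · obtain ⟨u, hadj, hu⟩ := hf.2.2 _ hw
    exact ⟨e u, by simpa using e.map_adj_iff.mpr hadj, by simpa using hu⟩

lemma rdNum_le_of_iso (e : G ≃g H) : rdNum H ≤ rdNum G := by
  obtain ⟨S, hS, hcard⟩ := exists_isRDS_card_eq_rdNum G
  simpa [hcard] using (hS.map_iso e).rdNum_le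

lemma ridNum_le_of_iso (e : G ≃g H) : ridNum H ≤ ridNum G := by
  obtain ⟨f, hf, hsum⟩ := exists_isRIDF_sum_eq_ridNum G
  calc ridNum H ≤ ∑ w, (f ∘ e.symm) w := (hf.comp_iso e).ridNum_le
    _ = ridNum G := hsum ▸ Equiv.sum_comp e.symm.toEquiv f

lemma rdNum_eq_of_iso (e : G ≃g H) : rdNum G = rdNum H :=
  le_antisymm (rdNum_le_of_iso e.symm) (rdNum_le_of_iso e)

lemma ridNum_eq_of_iso (e : G ≃g H) : ridNum G = ridNum H :=
  le_antisymm (ridNum_le_of_iso e.symm) (ridNum_le_of_iso e)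

end Iso

lemma SimpleGraph.IsAcyclic.cliqueFree_three {V : Type*} {G : SimpleGraph V}
    (hG : G.IsAcyclic) : G.CliqueFree 3 :=
  fun s hs =>
    let ⟨_, c, hc, _⟩ := SimpleGraph.is3Clique_iff_exists_cycle_length_three.mp ⟨s, hs⟩
    hG c hc

section Bounds

variable {V : Type*} [Fintype V] {G : SimpleGraph V}

lemma IsRIDF.isRDS_support {f : V → ℕ} (hf : IsRIDF G f) :
    IsRDS G (univ.filter (f · ≠ 0)) := by
  simp only [IsRDS, mem_filter, mem_univ, true_and, not_not]
  refine ⟨fun v hv => ?_, fun v hv => ?_⟩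
  · obtain ⟨u, hu, hu0⟩ := exists_ne_zero_of_sum_ne_zero (s := univ.filter (G.Adj v)) (f := f)
      (by linarith [hf.2.1 v hv])
    exact ⟨u, hu0, (mem_filter.mp hu).2⟩
  · obtain ⟨u, hvu, hu⟩ := hf.2.2 v hv
    exact ⟨u, hu, hvu⟩

lemma card_filter_ne_zero_le_sum (f : V → ℕ) : #(univ.filter (f · ≠ 0)) ≤ ∑ v, f v := by
  rw [card_eq_sum_ones, sum_filter]
  exact sum_le_sum fun v _ => by split_ifs <;> omega

lemma rdNum_le_ridNum (G : SimpleGraph V) : rdNum G ≤ ridNum G := by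
  obtain ⟨f, hf, hsum⟩ := exists_isRIDF_sum_eq_ridNum G
  exact hsum ▸ hf.isRDS_support.rdNum_le.trans (card_filter_ne_zero_le_sum f)

lemma IsRDS.isRIDF_two_mul_indicator {S : Finset V} (hS : IsRDS G S) :
    IsRIDF G fun v => if v ∈ S then 2 else 0 := by
  have hnot : ∀ v, (if v ∈ S then 2 else 0) = 0 → v ∉ S := fun v hv h => by simp [h] at hv
  refine ⟨fun v => by dsimp only; split_ifs <;> omega, fun v hv => ?_, fun v hv => ?_⟩
  · obtain ⟨u, hu, hvu⟩ := hS.1 v (hnot v hv)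
    calc 2 = (if u ∈ S then 2 else 0) := by simp [hu]
      _ ≤ _ := single_le_sum (f := fun u => if u ∈ S then 2 else 0) (fun _ _ => by omega)
          (mem_filter.mpr ⟨mem_univ u, hvu⟩)
  · obtain ⟨u, hu, hvu⟩ := hS.2 v (hnot v hv)
    exact ⟨u, hvu, by simp [hu]⟩

lemma ridNum_le_two_mul_rdNum (G : SimpleGraph V) : ridNum G ≤ 2 * rdNum G := by
  obtain ⟨S, hS, hcard⟩ := exists_isRDS_card_eq_rdNum G
  calc ridNum G ≤ ∑ v, if v ∈ S then 2 else 0 := hS.isRIDF_two_mul_indicator.ridNum_le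
    _ = 2 * rdNum G := by rw [← sum_filter, filter_mem_eq_inter, univ_inter, sum_const,
      smul_eq_mul, hcard, mul_comm]

lemma IsRDS.card_add_two_le {S : Finset V} (hS : IsRDS G S) (hSV : #S < Fintype.card V) :
    #S + 2 ≤ Fintype.card V := by
  obtain ⟨v, -, hv⟩ := exists_mem_notMem_of_card_lt_card (s := S) (t := univ)
    (by rwa [card_univ])
  obtain ⟨w, hw, hvw⟩ := hS.2 v hv
  have := card_le_card (subset_univ (insert v (insert w S)))
  rwa [card_insert_of_notMem (by simp [hv, hvw.ne]), card_insert_of_notMem hw, card_univ] at this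

lemma two_le_rdNum (hG : G.CliqueFree 3) (hV : 2 ≤ Fintype.card V) : 2 ≤ rdNum G := by
  obtain ⟨S, hS, hcard⟩ := exists_isRDS_card_eq_rdNum G
  by_contra! h
  obtain ⟨v, -, hv⟩ := exists_mem_notMem_of_card_lt_card (s := S) (t := univ)
    (by rw [card_univ]; omega)
  obtain ⟨u, hu, hvu⟩ := hS.1 v hv
  obtain ⟨w, hw, hvw⟩ := hS.2 v hv
  obtain ⟨u', hu', hwu'⟩ := hS.1 w hw
  obtain rfl : u' = u := card_le_one.mp (by omega) _ hu' _ hu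
  exact hG {v, w, u'} (SimpleGraph.is3Clique_triple_iff.mpr ⟨hvw, hvu, hwu'⟩)

lemma IsRIDF.four_le_sum_of_eq_zero (hG : G.CliqueFree 3) {f : V → ℕ} (hf : IsRIDF G f)
    {v : V} (hv : f v = 0) : 4 ≤ ∑ v, f v := by
  obtain ⟨w, hvw, hw⟩ := hf.2.2 v hv
  have hdisj : Disjoint (univ.filter (G.Adj v)) (univ.filter (G.Adj w)) := by
    refine disjoint_filter.mpr fun u _ hvu hwu =>
      hG {v, w, u} (SimpleGraph.is3Clique_triple_iff.mpr ⟨hvw, hvu, hwu⟩)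
  calc 4 ≤ ∑ u ∈ univ.filter (G.Adj v) ∪ univ.filter (G.Adj w), f u := by
        rw [sum_union hdisj]; linarith [hf.2.1 v hv, hf.2.1 w hw]
    _ ≤ ∑ v, f v := sum_le_sum_of_subset (subset_univ _)

lemma ridNum_ne_three_of_rdNum_eq_two (hG : G.CliqueFree 3) (hrd : rdNum G = 2) :
    ridNum G ≠ 3 := by
  intro hrid
  obtain ⟨f, hf, hsum⟩ := exists_isRIDF_sum_eq_ridNum G
  have hpos : ∀ v, 1 ≤ f v := fun v => by
    by_contra! h
    have := hf.four_le_sum_of_eq_zero hG (v := v) (by omega)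
    omega
  have hcard : Fintype.card V ≤ 3 := by
    simpa [hsum, hrid] using sum_le_sum fun v (_ : v ∈ univ) => hpos v
  obtain ⟨S, hS, hcardS⟩ := exists_isRDS_card_eq_rdNum G
  have := hS.card_add_two_le (by linarith [ridNum_le_card G])
  omega

end Bounds

lemma starGraph_adj_of_ne {V : Type*} {r v : V} (hv : v ≠ r) (x : V) :
    (SimpleGraph.starGraph r).Adj v x ↔ x = r := by
  rw [SimpleGraph.starGraph_adj]
  constructor
  · rintro ⟨-, h | h⟩
    exacts [absurd h hv, h]
  · rintro rfl
    exact ⟨hv, Or.inr rfl⟩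

section Star

variable {V : Type*} [Fintype V]

lemma rdNum_starGraph (r : V) : rdNum (SimpleGraph.starGraph r) = Fintype.card V := by
  refine le_antisymm (card_univ (α := V) ▸ (isRDS_univ _).rdNum_le) (le_rdNum fun S hS => ?_)
  have hleaf : ∀ v ≠ r, v ∈ S := fun v hv => hS.mem_of_adj_iff_eq (starGraph_adj_of_ne hv)
  have hr : r ∈ S := by
    by_contra hr
    obtain ⟨u, hu, hru⟩ := hS.2 r hr
    exact hu (hleaf u hru.ne.symm)
  rw [← card_univ, show S = univ from eq_univ_of_forall fun v =>
    if hv : v = r then hv ▸ hr else hleaf v hv]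

lemma ridNum_starGraph (r : V) : ridNum (SimpleGraph.starGraph r) = Fintype.card V := by
  refine le_antisymm (ridNum_le_card _) (le_ridNum fun f hf => ?_)
  have hleaf : ∀ v ≠ r, 0 < f v := fun v hv => hf.pos_of_adj_iff_eq (starGraph_adj_of_ne hv)
  have hpos : ∀ v, 0 < f v := fun v => by
    by_cases hv : v = r
    · subst hv
      refine Nat.pos_of_ne_zero fun h0 => ?_
      obtain ⟨u, hvu, hu⟩ := hf.2.2 v h0
      exact (hleaf u hvu.ne.symm).ne' hu
    · exact hleaf v hv
  simpa using sum_le_sum fun v (_ : v ∈ univ) => Nat.succ_le_of_lt (hpos v)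

end Star

section ParentGraph

variable {V : Type*}

def parentGraph (p : V → V) : SimpleGraph V :=
  SimpleGraph.fromRel fun v w => p v = w

lemma parentGraph_adj {p : V → V} {v w : V} :
    (parentGraph p).Adj v w ↔ v ≠ w ∧ (p v = w ∨ p w = v) :=
  SimpleGraph.fromRel_adj _ _ _

/-- Following parents reaches the root, and `v ↦ s(v, p v)` is a bijection from the non-root
vertices onto the edges. -/
theorem isTree_parentGraph [Finite V] {p : V → V} (root : V) (ht : V → ℕ)
    (hroot : p root = root) (hp : ∀ v ≠ root, ht (p v) < ht v) : (parentGraph p).IsTree := by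
  have hadj : ∀ v, v ≠ root → (parentGraph p).Adj v (p v) := fun v hv =>
    parentGraph_adj.mpr ⟨fun h => (hp v hv).ne (congrArg ht h.symm), Or.inl rfl⟩
  have hreach : ∀ v, (parentGraph p).Reachable root v := by
    intro v
    induction h : ht v using Nat.strong_induction_on generalizing v with
    | _ n ih =>
      by_cases hv : v = root
      · exact hv ▸ .rfl
      · exact (ih _ (h ▸ hp v hv) _ rfl).trans (hadj v hv).reachable.symm
  let toEdge : {v // v ≠ root} → (parentGraph p).edgeSet := fun v =>
    ⟨s(v, p v), hadj v v.2⟩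
  have hbij : Function.Bijective toEdge := by
    refine ⟨fun v w h => ?_, fun ⟨e, he⟩ => ?_⟩
    · rcases Sym2.eq_iff.mp (congrArg Subtype.val h) with ⟨hvw, -⟩ | ⟨hvw, hwv⟩
      · exact Subtype.ext hvw
      · have hv := hp v v.2
        have hw := hp w w.2
        rw [hwv] at hv
        rw [← hvw] at hw
        omega
    · induction e using Sym2.ind with
      | _ a b =>
        obtain ⟨hab, hpab | hpba⟩ := parentGraph_adj.mp he
        · refine ⟨⟨a, fun ha => hab ?_⟩, Subtype.ext (by simp [toEdge, hpab])⟩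
          rw [← hpab, ha, hroot]
        · refine ⟨⟨b, fun hb => hab ?_⟩, Subtype.ext (by simp [toEdge, hpba, Sym2.eq_swap])⟩
          rw [← hpba, hb, hroot]
  have := Fintype.ofFinite V
  rw [SimpleGraph.isTree_iff_connected_and_card,
    SimpleGraph.connected_iff_exists_forall_reachable, ← Nat.card_eq_of_bijective toEdge hbij,
    Nat.card_eq_fintype_card, Nat.card_eq_fintype_card, Fintype.card_subtype_compl,
    Fintype.card_subtype_eq]
  have := Fintype.card_pos_iff.mpr ⟨root⟩
  exact ⟨⟨root, hreach⟩, by omega⟩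

end ParentGraph

/-- The vertices of the spider with `m` leaves at the centre, `k` legs of length two and `j` legs
of length three; the subscript of `short₁ i`, `long₂ i`, ... is the distance from the centre. -/
inductive SpiderVertex (m k j : ℕ) : Type
  | center
  | leaf (i : Fin m)
  | short₁ (i : Fin k)
  | short₂ (i : Fin k)
  | long₁ (i : Fin j)
  | long₂ (i : Fin j)
  | long₃ (i : Fin j)
  deriving Fintype

namespace SpiderVertex

variable {m k j : ℕ}

def equivSum : SpiderVertex m k j ≃ Unit ⊕ Fin m ⊕ Fin k ⊕ Fin k ⊕ Fin j ⊕ Fin j ⊕ Fin j where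
  toFun
    | center => .inl ()
    | leaf i => .inr (.inl i)
    | short₁ i => .inr (.inr (.inl i))
    | short₂ i => .inr (.inr (.inr (.inl i)))
    | long₁ i => .inr (.inr (.inr (.inr (.inl i))))
    | long₂ i => .inr (.inr (.inr (.inr (.inr (.inl i)))))
    | long₃ i => .inr (.inr (.inr (.inr (.inr (.inr i)))))
  invFun
    | .inl () => center
    | .inr (.inl i) => leaf i
    | .inr (.inr (.inl i)) => short₁ i
    | .inr (.inr (.inr (.inl i))) => short₂ i
    | .inr (.inr (.inr (.inr (.inl i)))) => long₁ i
    | .inr (.inr (.inr (.inr (.inr (.inl i))))) => long₂ i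
    | .inr (.inr (.inr (.inr (.inr (.inr i))))) => long₃ i
  left_inv v := by cases v <;> rfl
  right_inv x := by rcases x with _ | _ | _ | _ | _ | _ | _ <;> rfl

lemma card_eq : Fintype.card (SpiderVertex m k j) = m + 2 * k + 3 * j + 1 := by
  rw [Fintype.card_congr equivSum]
  simp only [Fintype.card_sum, Fintype.card_unit, Fintype.card_fin]
  ring

lemma sum_univ (f : SpiderVertex m k j → ℕ) :
    ∑ v, f v = f center + ∑ i, f (leaf i) + ∑ i, (f (short₁ i) + f (short₂ i)) +
      ∑ i, (f (long₁ i) + f (long₂ i) + f (long₃ i)) := by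
  rw [← equivSum.symm.sum_comp]
  simp only [Fintype.sum_sum_type, Fintype.sum_unique, sum_add_distrib]
  simp only [equivSum, Equiv.coe_fn_symm_mk]
  ring

def parent : SpiderVertex m k j → SpiderVertex m k j
  | center | leaf _ | short₁ _ | long₁ _ => center
  | short₂ i => short₁ i
  | long₂ i => long₁ i
  | long₃ i => long₂ i

def depth : SpiderVertex m k j → ℕ
  | center => 0
  | leaf _ | short₁ _ | long₁ _ => 1
  | short₂ _ | long₂ _ => 2
  | long₃ _ => 3

end SpiderVertex

open SpiderVertex

def spider (m k j : ℕ) : SimpleGraph (SpiderVertex m k j) := parentGraph parent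

namespace spider

variable {m k j : ℕ}

lemma isTree : (spider m k j).IsTree :=
  isTree_parentGraph center depth rfl fun v hv => by cases v <;> simp_all [parent, depth]

lemma adj_leaf_iff {i : Fin m} (x : SpiderVertex m k j) :
    (spider m k j).Adj (leaf i) x ↔ x = center := by
  cases x <;> simp [spider, parentGraph_adj, parent]

lemma adj_short₁_iff {i : Fin k} (x : SpiderVertex m k j) :
    (spider m k j).Adj (short₁ i) x ↔ x = center ∨ x = short₂ i := by
  cases x <;> simp [spider, parentGraph_adj, parent, eq_comm]

lemma adj_short₂_iff {i : Fin k} (x : SpiderVertex m k j) :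
    (spider m k j).Adj (short₂ i) x ↔ x = short₁ i := by
  cases x <;> simp [spider, parentGraph_adj, parent, eq_comm]

lemma adj_long₁_iff {i : Fin j} (x : SpiderVertex m k j) :
    (spider m k j).Adj (long₁ i) x ↔ x = center ∨ x = long₂ i := by
  cases x <;> simp [spider, parentGraph_adj, parent, eq_comm]

lemma adj_long₂_iff {i : Fin j} (x : SpiderVertex m k j) :
    (spider m k j).Adj (long₂ i) x ↔ x = long₁ i ∨ x = long₃ i := by
  cases x <;> simp [spider, parentGraph_adj, parent, eq_comm]

lemma adj_long₃_iff {i : Fin j} (x : SpiderVertex m k j) :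
    (spider m k j).Adj (long₃ i) x ↔ x = long₂ i := by
  cases x <;> simp [spider, parentGraph_adj, parent, eq_comm]

lemma adj_center_iff {x : SpiderVertex m k j} :
    (spider m k j).Adj center x ↔
      (∃ i, x = leaf i) ∨ (∃ i, x = short₁ i) ∨ (∃ i, x = long₁ i) := by
  cases x <;> simp [spider, parentGraph_adj, parent]

lemma sum_adj_center (f : SpiderVertex m k j → ℕ) :
    ∑ u ∈ univ.filter ((spider m k j).Adj center), f u =
      ∑ i, f (leaf i) + ∑ i, f (short₁ i) + ∑ i, f (long₁ i) := by
  rw [sum_filter, sum_univ]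
  simp [adj_center_iff]

section ShortLegs

variable {m k : ℕ}

def shortLegsWeight : SpiderVertex m k 0 → ℕ
  | leaf _ => 1
  | short₂ _ => 2
  | _ => 0

lemma isRIDF_shortLegsWeight (hm : 2 ≤ m) (hk : 1 ≤ k) :
    IsRIDF (spider m k 0) shortLegsWeight := by
  refine ⟨fun v => by cases v <;> simp [shortLegsWeight], fun v hv => ?_, fun v hv => ?_⟩
  · cases v with
    | center => simpa [sum_adj_center, shortLegsWeight] using hm
    | short₁ i =>
      simp [sum_filter_adj_of_adj_iff_eq_or_eq adj_short₁_iff (by simp),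
        shortLegsWeight]
    | long₁ i | long₂ i | long₃ i => exact i.elim0
    | _ => simp [shortLegsWeight] at hv
  · cases v with
    | center => exact ⟨short₁ ⟨0, hk⟩, adj_center_iff.mpr (by simp), rfl⟩
    | short₁ i => exact ⟨center, (adj_short₁_iff _).mpr (Or.inl rfl), rfl⟩
    | long₁ i | long₂ i | long₃ i => exact i.elim0
    | _ => simp [shortLegsWeight] at hv

lemma le_sum_leaf {j : ℕ} {f : SpiderVertex m k j → ℕ} (hf : IsRIDF (spider m k j) f) :
    m ≤ ∑ i, f (leaf i) := by
  simpa using sum_le_sum fun i (_ : i ∈ univ) =>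
    Nat.succ_le_of_lt (hf.pos_of_adj_iff_eq (adj_leaf_iff (i := i)))

lemma two_le_short_leg {j : ℕ} {f : SpiderVertex m k j → ℕ} (hf : IsRIDF (spider m k j) f)
    (i : Fin k) : 2 ≤ f (short₁ i) + f (short₂ i) := by
  have h₂ := hf.pos_of_adj_iff_eq (adj_short₂_iff (i := i))
  by_cases h₁ : f (short₁ i) = 0
  · have := hf.of_adj_iff_eq_or_eq adj_short₁_iff (by simp) h₁
    omega
  · omega

lemma rdNum_short_legs (hm : 2 ≤ m) (hk : 1 ≤ k) : rdNum (spider m k 0) = m + k := by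
  refine le_antisymm ?_ (le_rdNum fun S hS => ?_)
  · refine (isRIDF_shortLegsWeight hm hk).isRDS_support.rdNum_le.trans_eq ?_
    rw [card_filter, sum_univ]
    simp [shortLegsWeight]
  · have hleaf : ∀ i, leaf i ∈ S := fun i => hS.mem_of_adj_iff_eq adj_leaf_iff
    have hshort₂ : ∀ i, short₂ i ∈ S := fun i => hS.mem_of_adj_iff_eq adj_short₂_iff
    rw [card_eq_sum_ite_mem, sum_univ]
    simp only [hleaf, hshort₂, if_true, sum_const, card_univ, Fintype.card_fin, smul_eq_mul,
      mul_one, sum_add_distrib, sum_boole, Nat.cast_id, univ_eq_empty, filter_empty, card_empty,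
      add_zero]
    omega

lemma ridNum_short_legs (hm : 2 ≤ m) (hk : 1 ≤ k) : ridNum (spider m k 0) = m + 2 * k := by
  refine le_antisymm ?_ (le_ridNum fun f hf => ?_)
  · refine (isRIDF_shortLegsWeight hm hk).ridNum_le.trans_eq ?_
    rw [sum_univ]
    simp [shortLegsWeight, mul_comm]
  · rw [sum_univ]
    have hlegs : 2 * k ≤ ∑ i, (f (short₁ i) + f (short₂ i)) := by
      simpa [mul_comm] using sum_le_sum fun i (_ : i ∈ univ) => two_le_short_leg hf i
    have := le_sum_leaf hf
    omega

end ShortLegs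

section LongLegs

def longLegsWeight : SpiderVertex m 0 j → ℕ
  | center | long₃ _ => 2
  | leaf _ => 1
  | _ => 0

lemma isRIDF_longLegsWeight : IsRIDF (spider m 0 j) longLegsWeight := by
  refine ⟨fun v => by cases v <;> simp [longLegsWeight], fun v hv => ?_, fun v hv => ?_⟩
  · cases v with
    | long₁ i =>
      simp [sum_filter_adj_of_adj_iff_eq_or_eq adj_long₁_iff (by simp),
        longLegsWeight]
    | long₂ i =>
      simp [sum_filter_adj_of_adj_iff_eq_or_eq adj_long₂_iff (by simp),
        longLegsWeight]
    | short₁ i | short₂ i => exact i.elim0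
    | _ => simp [longLegsWeight] at hv
  · cases v with
    | long₁ i => exact ⟨long₂ i, (adj_long₁_iff _).mpr (Or.inr rfl), rfl⟩
    | long₂ i => exact ⟨long₁ i, (adj_long₂_iff _).mpr (Or.inl rfl), rfl⟩
    | short₁ i | short₂ i => exact i.elim0
    | _ => simp [longLegsWeight] at hv

lemma rdNum_long_legs (hj : 1 ≤ j) : rdNum (spider m 0 j) = m + j + 1 := by
  refine le_antisymm ?_ (le_rdNum fun S hS => ?_)
  · refine isRIDF_longLegsWeight.isRDS_support.rdNum_le.trans_eq ?_
    rw [card_filter, sum_univ]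
    simp only [longLegsWeight, ne_eq, OfNat.ofNat_ne_zero, one_ne_zero, not_false_eq_true,
      not_true_eq_false, if_true, if_false, sum_const, card_univ, Fintype.card_fin, smul_eq_mul,
      mul_one, univ_eq_empty, add_zero, zero_add]
    ring
  · have hleaf : ∀ i, leaf i ∈ S := fun i => hS.mem_of_adj_iff_eq adj_leaf_iff
    have hlong₃ : ∀ i, long₃ i ∈ S := fun i => hS.mem_of_adj_iff_eq adj_long₃_iff
    let i₀ : Fin j := ⟨0, hj⟩
    have hextra : center ∈ S ∨ long₁ i₀ ∈ S ∨ long₂ i₀ ∈ S := by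
      by_contra! h
      exact h.2.2 (((hS.of_adj_iff_eq_or_eq (adj_long₁_iff) h.2.1).1).resolve_left h.1)
    rw [card_eq_sum_ite_mem, sum_univ]
    simp only [hleaf, hlong₃, if_true, sum_const, card_univ, Fintype.card_fin, smul_eq_mul,
      mul_one, univ_eq_empty, sum_add_distrib, sum_boole, filter_empty, card_empty,
      Nat.cast_id, add_zero]
    rcases hextra with h | h | h
    · simp only [h, if_true]
      omega
    · have : 0 < #{i | long₁ i ∈ S} := card_pos.mpr ⟨i₀, by simpa using h⟩
      omega
    · have : 0 < #{i | long₂ i ∈ S} := card_pos.mpr ⟨i₀, by simpa using h⟩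
      omega

variable {f : SpiderVertex m k j → ℕ}

lemma long₃_pos (hf : IsRIDF (spider m k j) f) (i : Fin j) : 0 < f (long₃ i) :=
  hf.pos_of_adj_iff_eq adj_long₃_iff

lemma two_le_of_long₂_eq_zero (hf : IsRIDF (spider m k j) f) {i : Fin j} (h : f (long₂ i) = 0) :
    2 ≤ f (long₃ i) ∧ 2 ≤ f center := by
  have h₃ := long₃_pos hf i
  have h₂ := hf.of_adj_iff_eq_or_eq adj_long₂_iff (by simp) h
  have h₁ : f (long₁ i) = 0 := by omega
  have := (hf.of_adj_iff_eq_or_eq adj_long₁_iff (by simp) h₁).1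
  omega

lemma two_le_long_leg (hf : IsRIDF (spider m k j) f) (i : Fin j) :
    2 ≤ f (long₁ i) + f (long₂ i) + f (long₃ i) := by
  have := long₃_pos hf i
  by_cases h : f (long₂ i) = 0
  · have := (two_le_of_long₂_eq_zero hf h).1
    omega
  · omega

lemma long₂_pos (hf : IsRIDF (spider m k j) f) (hc : f center ≤ 1) (i : Fin j) :
    0 < f (long₂ i) :=
  Nat.pos_of_ne_zero fun h => by
    have := (two_le_of_long₂_eq_zero hf h).2
    omega

lemma three_le_long_leg (hf : IsRIDF (spider m k j) f) (hc : f center = 1) (i : Fin j) :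
    3 ≤ f (long₁ i) + f (long₂ i) + f (long₃ i) := by
  have h₂ := long₂_pos hf hc.le i
  have h₁ : f (long₁ i) ≠ 0 := fun h => by
    have := (hf.of_adj_iff_eq_or_eq adj_long₁_iff (by simp) h).2
    omega
  have := long₃_pos hf i
  omega

/-- With an unweighted centre, the centre needs weight `2` from its neighbours, and its
`0`-neighbour is the first vertex of a long leg, whose second vertex must then carry weight `2`. -/
lemma two_mul_add_three_le_of_center_eq_zero {f : SpiderVertex m 0 j → ℕ}
    (hf : IsRIDF (spider m 0 j) f) (hc : f center = 0) :
    2 * j + 3 ≤ ∑ i, f (leaf i) + ∑ i, (f (long₁ i) + f (long₂ i) + f (long₃ i)) := by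
  obtain ⟨u, hu, hu0⟩ := hf.2.2 center hc
  rcases adj_center_iff.mp hu with ⟨i, rfl⟩ | ⟨i, rfl⟩ | ⟨i₁, rfl⟩
  · exact absurd hu0 (hf.pos_of_adj_iff_eq adj_leaf_iff).ne'
  · exact i.elim0
  have hnbhd := hf.2.1 center hc
  simp only [sum_adj_center, univ_eq_empty, sum_empty, add_zero] at hnbhd
  have hleg : ∀ i, f (long₁ i) + 2 ≤ f (long₁ i) + f (long₂ i) + f (long₃ i) := fun i => by
    have := long₂_pos hf (by omega) i
    have := long₃_pos hf i
    omega
  have hleg₁ : f (long₁ i₁) + 2 < f (long₁ i₁) + f (long₂ i₁) + f (long₃ i₁) := by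
    have := (hf.of_adj_iff_eq_or_eq adj_long₁_iff (by simp) hu0).1
    have := long₃_pos hf i₁
    omega
  have := sum_lt_sum (fun i (_ : i ∈ univ) => hleg i) ⟨i₁, mem_univ _, hleg₁⟩
  have hsplit : ∑ i, (f (long₁ i) + 2) = ∑ i, f (long₁ i) + 2 * j := by
    simp [sum_add_distrib, mul_comm]
  omega

lemma le_sum_of_long_legs {f : SpiderVertex m 0 j → ℕ} (hm : m ≤ 1) (hj : 1 ≤ j)
    (hf : IsRIDF (spider m 0 j) f) : m + 2 * j + 2 ≤ ∑ v, f v := by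
  have hleaf := le_sum_leaf hf
  rw [sum_univ]
  simp only [univ_eq_empty, sum_empty, add_zero]
  rcases (show 2 ≤ f center ∨ f center = 1 ∨ f center = 0 by omega) with hc | hc | hc
  · have := card_nsmul_le_sum univ _ 2 fun i _ => two_le_long_leg hf i
    simp only [card_univ, Fintype.card_fin, smul_eq_mul] at this
    omega
  · have := card_nsmul_le_sum univ _ 3 fun i _ => three_le_long_leg hf hc i
    simp only [card_univ, Fintype.card_fin, smul_eq_mul] at this
    omega
  · have := two_mul_add_three_le_of_center_eq_zero hf hc
    omega

lemma ridNum_long_legs (hm : m ≤ 1) (hj : 1 ≤ j) : ridNum (spider m 0 j) = m + 2 * j + 2 := by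
  refine le_antisymm ?_ (le_ridNum fun f hf => le_sum_of_long_legs hm hj hf)
  refine isRIDF_longLegsWeight.ridNum_le.trans_eq ?_
  rw [sum_univ]
  simp only [longLegsWeight, sum_const, card_univ, Fintype.card_fin, smul_eq_mul, mul_one,
    univ_eq_empty, add_zero, zero_add]
  ring

end LongLegs

end spider

lemma exists_fin_tree_of_isTree {V : Type*} [Fintype V] {G : SimpleGraph V} (hG : G.IsTree)
    (hV : 2 ≤ Fintype.card V) {a b : ℕ} (hrd : rdNum G = a) (hrid : ridNum G = b) :
    ∃ (n : ℕ) (T : SimpleGraph (Fin n)), 2 ≤ n ∧ T.IsTree ∧ rdNum T = a ∧ ridNum T = b :=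
  let e := G.overFinIso rfl
  ⟨_, _, hV, e.isTree_iff.mp hG, hrd ▸ (rdNum_eq_of_iso e).symm, hrid ▸ (ridNum_eq_of_iso e).symm⟩

theorem stmt15 (a b : ℕ) :
    (2 ≤ a ∧ a ≤ b ∧ b ≤ 2 * a ∧ (a, b) ≠ (2, 3)) ↔
      ∃ (n : ℕ) (T : SimpleGraph (Fin n)), 2 ≤ n ∧ T.IsTree ∧
        rdNum T = a ∧ ridNum T = b := by
  constructor
  · rintro ⟨ha, hab, hb, hne⟩
    simp only [ne_eq, Prod.mk.injEq] at hne
    rcases (show b = a ∨ (a < b ∧ b + 2 ≤ 2 * a) ∨ (2 * a ≤ b + 1 ∧ a + 2 ≤ b) by omega)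
      with rfl | h | h
    · exact ⟨b, SimpleGraph.starGraph ⟨0, by omega⟩, ha, SimpleGraph.isTree_starGraph _,
        by simp [rdNum_starGraph], by simp [ridNum_starGraph]⟩
    · exact exists_fin_tree_of_isTree (spider.isTree (m := 2 * a - b) (k := b - a) (j := 0))
        (by rw [SpiderVertex.card_eq]; omega) (by rw [spider.rdNum_short_legs] <;> omega)
        (by rw [spider.ridNum_short_legs] <;> omega)
    · exact exists_fin_tree_of_isTree (spider.isTree (m := 2 * a - b) (k := 0) (j := b - a - 1))
        (by rw [SpiderVertex.card_eq]; omega) (by rw [spider.rdNum_long_legs] <;> omega)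
        (by rw [spider.ridNum_long_legs] <;> omega)
  · rintro ⟨n, T, hn, hT, rfl, rfl⟩
    have hT₃ := hT.isAcyclic.cliqueFree_three
    refine ⟨two_le_rdNum hT₃ (by simpa using hn), rdNum_le_ridNum T, ridNum_le_two_mul_rdNum T,
      fun h => ridNum_ne_three_of_rdNum_eq_two hT₃ (Prod.mk.inj h).1 (Prod.mk.inj h).2⟩
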